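/- arXiv:2512.02661 — 3 statements merged into one kernel-verified Lean document; each statement's English description precedes it below -/
import Mathlib

section
/- For all real numbers λ_min, λ_max with 0 < λ_min ≤ λ_max, all α ∈ (0, 1], all β > 0, and all r > 0 satisfying λ_max·r ≤ 1, one has (1 − exp(−λ_min·α·r)) · exp(−λ_max·β·r) ≥ α·e^{−(1+β)}·λ_min·r. -/
lemma key_aux (x : ℝ) (hx0 : 0 ≤ x) (hx1 : x ≤ 1) :
    x * Real.exp (-1) ≤ 1 - Real.exp (-x) := by
  have h1 : x + 1 ≤ Real.exp x := Real.add_one_le_exp x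
  have h2 : Real.exp (-x) * Real.exp x = 1 := by
    rw [← Real.exp_add]; simp
  have h3 : Real.exp (-1) ≤ Real.exp (-x) := Real.exp_le_exp.2 (by linarith)
  have h4 : (0:ℝ) < Real.exp (-x) := Real.exp_pos _
  nlinarith [mul_le_mul_of_nonneg_left h1 h4.le]

theorem stmt_6 (lmin lmax α β r : ℝ) (h0 : 0 < lmin) (h1 : lmin ≤ lmax)
    (hα0 : 0 < α) (hα1 : α ≤ 1) (hβ : 0 < β) (hr : 0 < r) (hlr : lmax * r ≤ 1) :
    α * Real.exp (-(1 + β)) * lmin * r ≤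
      (1 - Real.exp (-(lmin * α * r))) * Real.exp (-(lmax * β * r)) := by
  have hx0 : 0 ≤ lmin * α * r := by positivity
  have hx1 : lmin * α * r ≤ 1 := by
    have h6 : lmin * α * r ≤ lmin * r := by nlinarith [mul_nonneg h0.le hr.le]
    have h7 : lmin * r ≤ lmax * r := by nlinarith
    linarith
  have hk := key_aux _ hx0 hx1
  have he : Real.exp (-β) ≤ Real.exp (-(lmax * β * r)) := by
    apply Real.exp_le_exp.2
    nlinarith
  have hsplit : Real.exp (-(1 + β)) = Real.exp (-1) * Real.exp (-β) := by
    rw [← Real.exp_add]; ring_nf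
  have h4 : (0:ℝ) < Real.exp (-β) := Real.exp_pos _
  have h5 : 0 ≤ 1 - Real.exp (-(lmin * α * r)) := by nlinarith [Real.exp_pos (-1)]
  calc α * Real.exp (-(1 + β)) * lmin * r
      = (lmin * α * r * Real.exp (-1)) * Real.exp (-β) := by rw [hsplit]; ring
    _ ≤ (1 - Real.exp (-(lmin * α * r))) * Real.exp (-β) :=
        mul_le_mul_of_nonneg_right hk h4.le
    _ ≤ (1 - Real.exp (-(lmin * α * r))) * Real.exp (-(lmax * β * r)) :=
        mul_le_mul_of_nonneg_left he h5
end

section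
/- Let (S, 𝒮) be a measurable space, let κ be a Markov kernel on S, let ν be a probability measure on S, and let ε ∈ (0, 1] be such that κ(x, E) ≥ ε·ν(E) for every x ∈ S and every measurable E ⊆ S. Then for any two probability measures μ₁, μ₂ on S, the total variation distance satisfies ‖μ₁κ − μ₂κ‖_TV ≤ (1 − ε)·‖μ₁ − μ₂‖_TV. -/
/-!
Take a Hahn set `s` for `μ₁ - μ₂`. For a measurable `f` with `0 ≤ f ≤ c`, the difference
`∫ f dμ₁ - ∫ f dμ₂` is at most its part on `s`, which is at most `c (μ₁ s - μ₂ s) ≤ c ‖μ₁ - μ₂‖_TV`.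
By the minorization applied to `E` and to `Eᶜ`, `x ↦ κ(x, E) - ε ν(E)` takes values in
`[0, 1 - ε]`, and integrating it against `μ₁` and `μ₂` gives `μ₁κ(E) - μ₂κ(E)`, since the
constant cancels between probability measures.
-/

open MeasureTheory ProbabilityTheory

/-- The total variation distance between two measures:
the supremum over measurable sets `E` of `|μ E - ν E|`. -/
noncomputable def tvDist {S : Type*} [MeasurableSpace S] (μ ν : Measure S) : ℝ :=
  ⨆ E : {E : Set S // MeasurableSet E}, |(μ E.1).toReal - (ν E.1).toReal|

open Set

section TotalVariation

variable {S : Type*} [MeasurableSpace S] {μ ν : Measure S}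

lemma bddAbove_range_abs_measureReal_sub (μ ν : Measure S) [IsFiniteMeasure μ]
    [IsFiniteMeasure ν] :
    BddAbove (range fun E : {E : Set S // MeasurableSet E} =>
      |(μ E.1).toReal - (ν E.1).toReal|) := by
  refine ⟨μ.real univ + ν.real univ, ?_⟩
  rintro _ ⟨E, rfl⟩
  have hμ : μ.real E.1 ≤ μ.real univ := measureReal_mono (subset_univ _)
  have hν : ν.real E.1 ≤ ν.real univ := measureReal_mono (subset_univ _)
  change |μ.real E.1 - ν.real E.1| ≤ _
  rw [abs_sub_le_iff]
  constructor <;> linarith [measureReal_nonneg (μ := μ) (s := E.1),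
    measureReal_nonneg (μ := ν) (s := E.1)]

lemma sub_le_tvDist [IsFiniteMeasure μ] [IsFiniteMeasure ν] {E : Set S}
    (hE : MeasurableSet E) : μ.real E - ν.real E ≤ tvDist μ ν :=
  (le_abs_self _).trans (le_ciSup (bddAbove_range_abs_measureReal_sub μ ν) ⟨E, hE⟩)

lemma tvDist_comm (μ ν : Measure S) : tvDist μ ν = tvDist ν μ := by
  simp only [tvDist, abs_sub_comm]

lemma tvDist_le {r : ℝ} (h : ∀ E, MeasurableSet E → μ.real E - ν.real E ≤ r)
    (h' : ∀ E, MeasurableSet E → ν.real E - μ.real E ≤ r) : tvDist μ ν ≤ r :=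
  ciSup_le fun E => abs_sub_le_iff.2 ⟨h E.1 E.2, h' E.1 E.2⟩

theorem integral_sub_integral_le_mul_tvDist [IsFiniteMeasure μ] [IsFiniteMeasure ν]
    {f : S → ℝ} {c : ℝ} (hf : Measurable f) (hf0 : 0 ≤ f) (hfc : ∀ x, f x ≤ c) (hc : 0 ≤ c) :
    ∫ x, f x ∂μ - ∫ x, f x ∂ν ≤ c * tvDist μ ν := by
  obtain ⟨s, hs, hle, hge⟩ := exists_isHahnDecomposition ν μ
  have hfi : ∀ (ρ : Measure S) [IsFiniteMeasure ρ], Integrable f ρ := fun ρ _ =>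
    .of_bound hf.aestronglyMeasurable c
      (ae_of_all _ fun x => (Real.norm_of_nonneg (hf0 x)).trans_le (hfc x))
  have hgap : ∫ x in s, (c - f x) ∂ν ≤ ∫ x in s, (c - f x) ∂μ :=
    integral_mono_measure hle (ae_of_all _ fun x => sub_nonneg.2 (hfc x))
      ((integrable_const c).sub (hfi _))
  have hcompl : ∫ x in sᶜ, f x ∂μ ≤ ∫ x in sᶜ, f x ∂ν :=
    integral_mono_measure hge (ae_of_all _ hf0) (hfi _)
  rw [integral_sub (integrable_const c) (hfi _),
    integral_sub (integrable_const c) (hfi _)] at hgap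
  simp only [integral_const, measureReal_restrict_apply_univ, smul_eq_mul] at hgap
  rw [← integral_add_compl hs (hfi μ), ← integral_add_compl hs (hfi ν)]
  linarith [mul_le_mul_of_nonneg_left (sub_le_tvDist (μ := μ) (ν := ν) hs) hc]

end TotalVariation

section Minorization

variable {S α : Type*} [MeasurableSpace S] [MeasurableSpace α] {κ : Kernel α S}
  {ν : Measure S} {ε : ℝ} {E : Set S}

lemma measureReal_bind_apply [IsFiniteKernel κ] (μ : Measure α) (hE : MeasurableSet E) :
    (μ.bind κ).real E = ∫ x, (κ x).real E ∂μ := by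
  rw [measureReal_def, Measure.bind_apply hE κ.measurable.aemeasurable]
  exact (integral_toReal (κ.measurable_coe hE).aemeasurable
    (ae_of_all _ fun x => measure_lt_top _ _)).symm

lemma mul_measureReal_le_of_minorization [IsFiniteKernel κ] [IsFiniteMeasure ν] (hε : 0 ≤ ε)
    (hmin : ∀ x E, MeasurableSet E → ENNReal.ofReal ε * ν E ≤ κ x E)
    (x : α) (hE : MeasurableSet E) : ε * ν.real E ≤ (κ x).real E := by
  have h := ENNReal.toReal_mono (measure_ne_top _ _) (hmin x E hE)
  rwa [ENNReal.toReal_mul, ENNReal.toReal_ofReal hε] at h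

lemma measureReal_le_of_minorization [IsMarkovKernel κ] [IsProbabilityMeasure ν] (hε : 0 ≤ ε)
    (hmin : ∀ x E, MeasurableSet E → ENNReal.ofReal ε * ν E ≤ κ x E)
    (x : α) (hE : MeasurableSet E) : (κ x).real E ≤ ε * ν.real E + (1 - ε) := by
  have h := mul_measureReal_le_of_minorization hε hmin x hE.compl
  rw [probReal_compl_eq_one_sub hE, probReal_compl_eq_one_sub hE] at h
  linarith

lemma measureReal_bind_sub_le_of_minorization [IsMarkovKernel κ] [IsProbabilityMeasure ν]
    (hε0 : 0 ≤ ε) (hε1 : ε ≤ 1)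
    (hmin : ∀ x E, MeasurableSet E → ENNReal.ofReal ε * ν E ≤ κ x E)
    (μ₁ μ₂ : Measure α) [IsProbabilityMeasure μ₁] [IsProbabilityMeasure μ₂]
    (hE : MeasurableSet E) :
    (μ₁.bind κ).real E - (μ₂.bind κ).real E ≤ (1 - ε) * tvDist μ₁ μ₂ := by
  set a := ε * ν.real E
  have hbind : ∀ (μ : Measure α) [IsProbabilityMeasure μ],
      ∫ x, ((κ x).real E - a) ∂μ = (μ.bind κ).real E - a := fun μ _ => by
    rw [integral_sub _ (integrable_const a), integral_const, measureReal_bind_apply μ hE]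
    · simp
    · exact .of_bound (κ.measurable_coe hE).ennreal_toReal.aestronglyMeasurable 1
        (ae_of_all _ fun x => by
          rw [Real.norm_of_nonneg measureReal_nonneg]; exact measureReal_le_one)
  have h := integral_sub_integral_le_mul_tvDist (μ := μ₁) (ν := μ₂)
    (f := fun x => (κ x).real E - a) (c := 1 - ε)
    ((κ.measurable_coe hE).ennreal_toReal.sub measurable_const)
    (fun x => sub_nonneg.2 (mul_measureReal_le_of_minorization hε0 hmin x hE))
    (fun x => by linarith [measureReal_le_of_minorization hε0 hmin x hE]) (by linarith)
  rwa [hbind μ₁, hbind μ₂, sub_sub_sub_cancel_right] at h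

end Minorization

theorem stmt_7 {S : Type*} [MeasurableSpace S] (κ : Kernel S S) [IsMarkovKernel κ]
    (ν : Measure S) [IsProbabilityMeasure ν] (ε : ℝ) (hε0 : 0 < ε) (hε1 : ε ≤ 1)
    (hmin : ∀ x : S, ∀ E : Set S, MeasurableSet E → ENNReal.ofReal ε * ν E ≤ κ x E)
    (μ₁ μ₂ : Measure S) [IsProbabilityMeasure μ₁] [IsProbabilityMeasure μ₂] :
    tvDist (μ₁.bind κ) (μ₂.bind κ) ≤ (1 - ε) * tvDist μ₁ μ₂ := by
  refine tvDist_le (fun E hE => ?_) (fun E hE => ?_)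
  · exact measureReal_bind_sub_le_of_minorization hε0.le hε1 hmin μ₁ μ₂ hE
  · rw [tvDist_comm μ₁ μ₂]
    exact measureReal_bind_sub_le_of_minorization hε0.le hε1 hmin μ₂ μ₁ hE
end

section
/- Let (S, 𝒮) be a measurable space, let κ be a Markov kernel on S, let μ be a finite measure on S with μ(S) > 0, and let C > 0 be such that C·μ(S) ≤ 1 and κ(x, E) ≥ C·μ(E) for every x ∈ S and every measurable E ⊆ S. Let π be an invariant probability measure for κ. Then for every n ≥ 1, every x ∈ S, and every measurable E ⊆ S, one has |κⁿ(x, E) − π(E)| ≤ (1 − C·μ(S))ⁿ, where κⁿ denotes the n-fold composition of the kernel κ. -/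
open MeasureTheory ProbabilityTheory

/-- `kpow κ n` is the `n`-fold composition of the kernel `κ`, with `kpow κ 0` the identity
kernel, so that `kpow κ 1 = κ` and `kpow κ (n+1) (x, E) = ∫ kpow κ n (y, E) κ(x, dy)`. -/
noncomputable def kpow {S : Type*} [MeasurableSpace S] (κ : Kernel S S) : ℕ → Kernel S S
  | 0 => Kernel.id
  | n + 1 => (kpow κ n) ∘ₖ κ

/-! Doeblin's argument. The measure `ν = C • μ` lies below every `κ x`, so each `κ x` splits as
the common part `ν` plus a remainder of mass `1 - ν univ`. Integrating a function of oscillation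
`a` against `κ z` and `κ w`, the `ν`-parts cancel and the remainders differ by at most
`(1 - ν univ) * a`. Applied to `y ↦ κⁿ(y, E)` this gives oscillation at most `(1 - ν univ)ⁿ`, and
by invariance `π E = ∫ κⁿ(y, E) dπ(y)` is an average of these values, hence within
`(1 - ν univ)ⁿ` of `κⁿ(x, E)`. -/

open Set
open scoped ENNReal

lemma ENNReal.abs_toReal_sub_le_of_le_add {a b c : ℝ≥0∞} (ha : a ≠ ∞) (hb : b ≠ ∞) (hc : c ≠ ∞)
    (hab : a ≤ b + c) (hba : b ≤ a + c) : |a.toReal - b.toReal| ≤ c.toReal := by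
  have h₁ := ENNReal.toReal_le_add hab hb hc
  have h₂ := ENNReal.toReal_le_add hba ha hc
  rw [abs_sub_le_iff]
  constructor <;> linarith

section Averaging

variable {S : Type*} [MeasurableSpace S] {π : Measure S} [IsProbabilityMeasure π]
  {g : S → ℝ≥0∞} {b : ℝ≥0∞}

lemma le_lintegral_add_of_le_add {x : S} (h : ∀ y, g x ≤ g y + b) : g x ≤ ∫⁻ y, g y ∂π + b :=
  calc g x = ∫⁻ _, g x ∂π := by rw [lintegral_const, measure_univ, mul_one]
    _ ≤ ∫⁻ y, g y + b ∂π := lintegral_mono h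
    _ = ∫⁻ y, g y ∂π + b := by rw [lintegral_add_right _ measurable_const, lintegral_const,
        measure_univ, mul_one]

lemma lintegral_le_add_of_le_add {x : S} (h : ∀ y, g y ≤ g x + b) : ∫⁻ y, g y ∂π ≤ g x + b :=
  calc ∫⁻ y, g y ∂π ≤ ∫⁻ _, g x + b ∂π := lintegral_mono h
    _ = g x + b := by rw [lintegral_const, measure_univ, mul_one]

end Averaging

section Doeblin

variable {S : Type*} [MeasurableSpace S] {κ : Kernel S S}

instance isMarkovKernel_kpow [IsMarkovKernel κ] (n : ℕ) : IsMarkovKernel (kpow κ n) := by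
  induction n with
  | zero => exact inferInstanceAs (IsMarkovKernel Kernel.id)
  | succ n ih => exact inferInstanceAs (IsMarkovKernel (kpow κ n ∘ₖ κ))

lemma kpow_succ_apply (n : ℕ) (x : S) {E : Set S} (hE : MeasurableSet E) :
    kpow κ (n + 1) x E = ∫⁻ y, kpow κ n y E ∂κ x :=
  Kernel.comp_apply' _ _ _ hE

lemma kpow_comp_of_comp_eq {π : Measure S} (hπ : κ ∘ₘ π = π) (n : ℕ) : kpow κ n ∘ₘ π = π := by
  induction n with
  | zero => exact Measure.id_comp
  | succ n ih => rw [kpow, ← Measure.comp_assoc, hπ, ih]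

lemma lintegral_le_lintegral_add_of_le_add [IsMarkovKernel κ] {ν : Measure S}
    (hν : ∀ x, ν ≤ κ x) {f : S → ℝ≥0∞} {a : ℝ≥0∞} (hf : ∀ u v, f u ≤ f v + a) (z w : S) :
    ∫⁻ y, f y ∂κ z ≤ ∫⁻ y, f y ∂κ w + (1 - ν univ) * a := by
  have : IsFiniteMeasure ν := isFiniteMeasure_of_le (κ z) (hν z)
  have hmass (x : S) : (κ x - ν) univ = 1 - ν univ := by
    rw [Measure.sub_apply .univ (hν x), measure_univ]
  have hsplit (x : S) : ∫⁻ y, f y ∂κ x = ∫⁻ y, f y ∂(κ x - ν) + ∫⁻ y, f y ∂ν := by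
    rw [← lintegral_add_measure, Measure.sub_add_cancel_of_le (hν x)]
  have hsup : ⨆ u, f u ≤ (⨅ v, f v) + a :=
    iSup_le fun u => ENNReal.iInf_add ▸ le_iInf (hf u)
  calc ∫⁻ y, f y ∂κ z
      ≤ ((⨅ v, f v) + a) * (1 - ν univ) + ∫⁻ y, f y ∂ν := by
        rw [hsplit, ← hmass z]
        gcongr
        exact (lintegral_le_iSup_mul f).trans (by gcongr)
    _ = (⨅ v, f v) * (κ w - ν) univ + ∫⁻ y, f y ∂ν + (1 - ν univ) * a := by
        rw [hmass w]; ring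
    _ ≤ ∫⁻ y, f y ∂κ w + (1 - ν univ) * a := by
        rw [hsplit]
        gcongr
        exact iInf_mul_le_lintegral f

lemma kpow_apply_le_add [IsMarkovKernel κ] {ν : Measure S} (hν : ∀ x, ν ≤ κ x)
    {E : Set S} (hE : MeasurableSet E) (n : ℕ) (u v : S) :
    kpow κ n u E ≤ kpow κ n v E + (1 - ν univ) ^ n := by
  induction n generalizing u v with
  | zero => simpa using prob_le_one.trans le_add_self
  | succ n ih =>
    rw [kpow_succ_apply _ _ hE, kpow_succ_apply _ _ hE, pow_succ']
    exact lintegral_le_lintegral_add_of_le_add hν (ih · ·) u v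

theorem abs_toReal_kpow_apply_sub_le [IsMarkovKernel κ] {ν : Measure S} (hν : ∀ x, ν ≤ κ x)
    {π : Measure S} [IsProbabilityMeasure π] (hπ : κ ∘ₘ π = π) (n : ℕ) (x : S)
    {E : Set S} (hE : MeasurableSet E) :
    |(kpow κ n x E).toReal - (π E).toReal| ≤ (1 - (ν univ).toReal) ^ n := by
  have hν_le_one : ν univ ≤ 1 := (hν x univ).trans prob_le_one
  have hπE : π E = ∫⁻ y, kpow κ n y E ∂π := by
    rw [← Measure.bind_apply hE (Kernel.aemeasurable _), kpow_comp_of_comp_eq hπ]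
  rw [← ENNReal.toReal_one, ← ENNReal.toReal_sub_of_le hν_le_one ENNReal.one_ne_top,
    ← ENNReal.toReal_pow]
  refine ENNReal.abs_toReal_sub_le_of_le_add (measure_ne_top _ _) (measure_ne_top _ _)
    (ENNReal.pow_ne_top (ENNReal.sub_ne_top ENNReal.one_ne_top)) ?_ ?_ <;> rw [hπE]
  · exact le_lintegral_add_of_le_add (kpow_apply_le_add hν hE n x)
  · exact lintegral_le_add_of_le_add (kpow_apply_le_add hν hE n · x)

end Doeblin

theorem stmt_9_general {S : Type*} [MeasurableSpace S] (κ : Kernel S S) [IsMarkovKernel κ]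
    (μ : Measure S)
    (C : ℝ)
    (hmin : ∀ x : S, ∀ E : Set S, MeasurableSet E → ENNReal.ofReal C * μ E ≤ κ x E)
    (π : Measure S) [IsProbabilityMeasure π] (hπ : π.bind κ = π) :
    ∀ n : ℕ, 1 ≤ n → ∀ x : S, ∀ E : Set S, MeasurableSet E →
      |(kpow κ n x E).toReal - (π E).toReal| ≤ (1 - C * (μ Set.univ).toReal) ^ n := by
  intro n _ x E hE
  set ν : Measure S := ENNReal.ofReal C • μ
  have hν (y : S) : ν ≤ κ y := Measure.le_iff.2 (hmin y)
  have hν_le_one : (ν univ).toReal ≤ 1 :=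
    ENNReal.toReal_le_of_le_ofReal zero_le_one (by simpa using (hν x univ).trans prob_le_one)
  have hCμ : C * (μ univ).toReal ≤ (ν univ).toReal := by
    simp only [ν, Measure.smul_apply, smul_eq_mul, ENNReal.toReal_mul, ENNReal.toReal_ofReal']
    gcongr
    exact le_max_left C 0
  calc |(kpow κ n x E).toReal - (π E).toReal| ≤ (1 - (ν univ).toReal) ^ n :=
        abs_toReal_kpow_apply_sub_le hν hπ n x hE
    _ ≤ (1 - C * (μ univ).toReal) ^ n := pow_le_pow_left₀ (by linarith) (by linarith) n

theorem stmt_9 {S : Type*} [MeasurableSpace S] (κ : Kernel S S) [IsMarkovKernel κ]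
    (μ : Measure S) [IsFiniteMeasure μ] (hμ : 0 < μ Set.univ) (C : ℝ) (hC : 0 < C)
    (hC1 : C * (μ Set.univ).toReal ≤ 1)
    (hmin : ∀ x : S, ∀ E : Set S, MeasurableSet E → ENNReal.ofReal C * μ E ≤ κ x E)
    (π : Measure S) [IsProbabilityMeasure π] (hπ : π.bind κ = π) :
    ∀ n : ℕ, 1 ≤ n → ∀ x : S, ∀ E : Set S, MeasurableSet E →
      |(kpow κ n x E).toReal - (π E).toReal| ≤ (1 - C * (μ Set.univ).toReal) ^ n :=
  stmt_9_general κ μ C hmin π hπ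
end
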